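/- arXiv:2208.02167 — 4 statements merged into one kernel-verified Lean document; each statement's English description precedes it below -/
import Mathlib

section
/- For every integer d ≥ 2, every n ∈ ℕ and every u ∈ ℝ, Σ_{j=0}^{d} (−1)^j C(d,j) C_{n−2j}^{d}(u) = Σ_{j=0}^{d−1} (−1)^j C(d−1,j) Z_{n−2j}^{d−1}(u). -/
open MeasureTheory Real Filter

noncomputable section

/-- Divided difference `[x 0, …, x (k-1)] f` of `f : ℝ → ℝ` at `k` (pairwise distinct) knots. -/
def divDiff : (k : ℕ) → (Fin k → ℝ) → (ℝ → ℝ) → ℝ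
  | 0, _, _ => 0
  | 1, x, f => f (x 0)
  | k + 2, x, f =>
      (divDiff (k + 1) (fun i => x i.castSucc) f -
        divDiff (k + 1) (fun i => x i.succ) f) / (x 0 - x (Fin.last (k + 1)))

/-- B-spline `M_{k-1}(u | x 0, …, x (k-1))` of order `k - 1` with `k` knots:
the divided difference of `x ↦ (x-u)_+^{k-2}/(k-2)!`, where for `k = 2` the power
`(x-u)_+^0` is the indicator function of `x > u`. -/
def Mspline (k : ℕ) (x : Fin k → ℝ) (u : ℝ) : ℝ :=
  divDiff k x fun t => if u < t then (t - u) ^ (k - 2) / (k - 2).factorial else 0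

/-- The finite set `{α ∈ ℤ^d : |α₁| + ⋯ + |α_d| = n}`. -/
def l1Sphere (d n : ℕ) : Finset (Fin d → ℤ) :=
  (Finset.Icc (fun _ => -(n : ℤ)) fun _ => (n : ℤ)).filter fun α => ∑ i, |α i| = (n : ℤ)

/-- `E_n(θ) = Σ_{α ∈ ℤ^d, |α|₁ = n} e^{i α·θ}`. -/
def En (d n : ℕ) (θ : Fin d → ℝ) : ℂ :=
  ∑ α ∈ l1Sphere d n, Complex.exp (Complex.I * ∑ i, (α i : ℂ) * (θ i : ℂ))

/-- `N_d(n) = #{α ∈ ℤ^d : |α|₁ = n}`. -/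
def Nd (d n : ℕ) : ℕ := (l1Sphere d n).card

/-- Gegenbauer polynomial `C_n^λ(t)`, with the convention `C_n^λ := 0` for `n < 0`. -/
def gegen (lam : ℝ) (n : ℤ) (t : ℝ) : ℝ :=
  if 0 ≤ n then
    ∑ k ∈ Finset.range (n.toNat / 2 + 1),
      (-1 : ℝ) ^ k * (ascPochhammer ℝ (n.toNat - k)).eval lam * (2 * t) ^ (n.toNat - 2 * k) /
        ((k.factorial : ℝ) * (n.toNat - 2 * k).factorial)
  else 0

/-- `Z_n^λ(t) = ((n + λ)/λ) C_n^λ(t)`. -/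
def Zgegen (lam : ℝ) (n : ℤ) (t : ℝ) : ℝ := (((n : ℝ) + lam) / lam) * gegen lam n t

/-- `h_{n,d}(u) = (d-1)! Σ_{j=0}^d (-1)^j C(d,j) C_{n-2j}^d(u)`. -/
def hnd (d n : ℕ) (u : ℝ) : ℝ :=
  (d - 1).factorial * ∑ j ∈ Finset.range (d + 1),
    (-1 : ℝ) ^ j * (d.choose j) * gegen d ((n : ℤ) - 2 * j) u

/-- The box `[-π, π]^d`. -/
def torusBox (d : ℕ) : Set (Fin d → ℝ) := Set.Icc (fun _ => -π) fun _ => π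

/-- `m_{n,d}(u) = (2π)^{-d} ∫_{[-π,π]^d} M_{d-1}(u | cos θ₁, …, cos θ_d) (E_n(θ)/N_d(n)) dθ`. -/
def mnd (d n : ℕ) (u : ℝ) : ℂ :=
  (1 / (2 * π) ^ d : ℝ) • ∫ θ in torusBox d,
    (Mspline d (fun i => Real.cos (θ i)) u : ℂ) * (En d n θ / (Nd d n : ℂ))

/-- The normalization constant `c_λ` with `c_λ ∫_{-1}^1 (1-t²)^{λ-1/2} dt = 1`. -/
def cconst (lam : ℝ) : ℝ := (∫ t in (-1 : ℝ)..1, (1 - t ^ 2) ^ (lam - 1 / 2))⁻¹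


open Polynomial in
lemma poch_eval_succ_left (lam : ℝ) (s : ℕ) :
    (ascPochhammer ℝ (s+1)).eval lam = lam * (ascPochhammer ℝ s).eval (lam + 1) := by
  rw [ascPochhammer_succ_left]
  simp [eval_comp]

lemma poch_key (lam : ℝ) (hl : lam ≠ 0) (s c : ℕ) :
    (((s:ℝ) + 1 + c + lam)/lam) * (ascPochhammer ℝ (s+1)).eval lam
      = (ascPochhammer ℝ (s+1)).eval (lam+1) + c * (ascPochhammer ℝ s).eval (lam+1) := by
  rw [poch_eval_succ_left, ascPochhammer_succ_eval]
  field_simp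
  ring

def gterm (lam u : ℝ) (m k : ℕ) : ℝ :=
  (-1:ℝ)^k * (ascPochhammer ℝ (m - k)).eval lam * (2*u)^(m - 2*k) /
    ((k.factorial : ℝ) * (m - 2*k).factorial)

lemma term0 (lam u : ℝ) (hl : lam ≠ 0) (m : ℕ) (hm : 1 ≤ m) :
    (((m:ℝ)+lam)/lam) * gterm lam u m 0 = gterm (lam+1) u m 0 := by
  obtain ⟨s, rfl⟩ : ∃ s, m = s + 1 := ⟨m - 1, by omega⟩
  have h := poch_key lam hl s 0
  unfold gterm
  simp only [Nat.sub_zero, Nat.mul_zero, pow_zero, one_mul, Nat.factorial_zero, Nat.cast_one,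
    Nat.cast_zero, zero_add] at h ⊢
  push_cast at h ⊢
  linear_combination ((2*u)^(s+1) / (s+1).factorial) * h

lemma term1 (lam u : ℝ) (hl : lam ≠ 0) (m k : ℕ) (hk : 2*(k+1) ≤ m) :
    (((m:ℝ)+lam)/lam) * gterm lam u m (k+1)
      = gterm (lam+1) u m (k+1) - gterm (lam+1) u (m-2) k := by
  obtain ⟨p, rfl⟩ : ∃ p, m = p + 2*k + 2 := ⟨m - (2*k+2), by omega⟩
  have h := poch_key lam hl (p+k) (k+1)
  have e1 : p + 2*k + 2 - (k+1) = (p+k)+1 := by omega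
  have e2 : p + 2*k + 2 - 2*(k+1) = p := by omega
  have e3 : p + 2*k + 2 - 2 - k = p + k := by omega
  have e4 : p + 2*k + 2 - 2 - 2*k = p := by omega
  have hk1 : ((k:ℝ)+1) ≠ 0 := by positivity
  have h3 : ((k:ℝ)+1) * ((k:ℝ)+1)⁻¹ = 1 := mul_inv_cancel₀ hk1
  have h4 : ((((k:ℝ)+1) * (k.factorial:ℝ) * (p.factorial:ℝ))⁻¹ : ℝ)
      = ((k:ℝ)+1)⁻¹ * ((k.factorial:ℝ))⁻¹ * ((p.factorial:ℝ))⁻¹ := by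
    rw [mul_inv, mul_inv]
  unfold gterm
  rw [e1, e2, e3, e4, Nat.factorial_succ]
  push_cast at h ⊢
  linear_combination ((-1:ℝ)^(k+1)*(2*u)^p * (((k:ℝ)+1)*(k.factorial:ℝ)*(p.factorial:ℝ))⁻¹) * h
    + ((-1:ℝ)^(k+1)*(2*u)^p * Polynomial.eval (lam+1) (ascPochhammer ℝ (p+k))
        * ((k.factorial:ℝ)*(p.factorial:ℝ))⁻¹) * h3
    + (-((-1:ℝ)^k*(2*u)^p * Polynomial.eval (lam+1) (ascPochhammer ℝ (p+k)) * ((k:ℝ)+1))) * h4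

lemma gegen_natCast (lam u : ℝ) (m : ℕ) :
    gegen lam (m:ℤ) u = ∑ k ∈ Finset.range (m/2+1), gterm lam u m k := by
  simp [gegen, gterm]

lemma gegen_neg (lam u : ℝ) (z : ℤ) (hz : z < 0) : gegen lam z u = 0 := by
  simp [gegen, not_le.mpr hz]

lemma zkey (lam u : ℝ) (hl : lam ≠ 0) (z : ℤ) :
    Zgegen lam z u = gegen (lam+1) z u - gegen (lam+1) (z-2) u := by
  rcases lt_or_ge z 0 with hz | hz
  · rw [Zgegen, gegen_neg lam u z hz, gegen_neg _ u z hz, gegen_neg _ u _ (by omega)]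
    ring
  · obtain ⟨m, rfl⟩ := Int.eq_ofNat_of_zero_le hz
    match m with
    | 0 =>
        have h2 : ((0:ℕ):ℤ) - 2 < 0 := by norm_num
        rw [Zgegen, gegen_natCast, gegen_natCast, gegen_neg _ u _ h2]
        simp [gterm, div_self hl]
    | 1 =>
        have h2 : ((1:ℕ):ℤ) - 2 < 0 := by norm_num
        rw [Zgegen, gegen_natCast, gegen_natCast, gegen_neg _ u _ h2]
        simp only [Nat.reduceDiv, zero_add, Finset.sum_range_one]
        unfold gterm
        simp only [pow_zero, one_mul, Nat.factorial_zero, Nat.factorial_one, Nat.cast_one,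
          Nat.cast_ofNat, Nat.sub_zero, Nat.mul_zero]
        rw [ascPochhammer_one]
        simp only [Polynomial.eval_X]
        field_simp
        ring
    | (m' + 2) =>
        have h2 : ((m' + 2 : ℕ):ℤ) - 2 = (m' : ℤ) := by push_cast; ring
        rw [Zgegen, gegen_natCast, gegen_natCast, h2, gegen_natCast]
        have hdiv : (m' + 2)/2 + 1 = (m'/2 + 1) + 1 := by omega
        rw [hdiv, Finset.mul_sum, Finset.sum_range_succ', Finset.sum_range_succ'
          (fun k => gterm (lam+1) u (m'+2) k) (m'/2+1)]
        have hA : ∀ k ∈ Finset.range (m'/2+1),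
            ((((m'+2:ℕ):ℝ))+lam)/lam * gterm lam u (m'+2) (k+1)
              = gterm (lam+1) u (m'+2) (k+1) - gterm (lam+1) u m' k := by
          intro k hk
          have hk' : k ≤ m'/2 := by simpa using Nat.lt_succ_iff.mp (Finset.mem_range.mp hk)
          have := term1 lam u hl (m'+2) k (by omega)
          simpa using this
        push_cast at hA ⊢
        rw [Finset.sum_congr rfl hA, Finset.sum_sub_distrib]
        have h0 := term0 lam u hl (m'+2) (by omega)
        push_cast at h0
        rw [h0]
        ring

lemma telescope (e : ℕ) (g : ℕ → ℝ) :
    ∑ j ∈ Finset.range (e+2), (-1:ℝ)^j * ((e+1).choose j : ℝ) * g j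
      = ∑ j ∈ Finset.range (e+1), (-1:ℝ)^j * (e.choose j : ℝ) * (g j - g (j+1)) := by
  have hH : ∑ j ∈ Finset.range (e+1), (-1:ℝ)^j * (e.choose j : ℝ) * g (j+1)
      = ∑ j ∈ Finset.range (e+2),
          (if j = 0 then (0:ℝ) else (-1:ℝ)^(j-1) * (e.choose (j-1) : ℝ)) * g j := by
    rw [Finset.sum_range_succ'
      (fun j => (if j = 0 then (0:ℝ) else (-1:ℝ)^(j-1) * (e.choose (j-1) : ℝ)) * g j) (e+1)]
    simp
  have h1 : ∑ j ∈ Finset.range (e+2), (-1:ℝ)^j * (e.choose j : ℝ) * g j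
      = ∑ j ∈ Finset.range (e+1), (-1:ℝ)^j * (e.choose j : ℝ) * g j := by
    rw [Finset.sum_range_succ]
    simp [Nat.choose_succ_self]
  calc ∑ j ∈ Finset.range (e+2), (-1:ℝ)^j * ((e+1).choose j : ℝ) * g j
      = ∑ j ∈ Finset.range (e+2), ((-1:ℝ)^j * (e.choose j : ℝ) * g j
          - (if j = 0 then (0:ℝ) else (-1:ℝ)^(j-1) * (e.choose (j-1) : ℝ)) * g j) := by
        refine Finset.sum_congr rfl fun j _ => ?_
        match j with
        | 0 => simp
        | s+1 =>
          simp only [Nat.choose_succ_succ, Nat.cast_add, Nat.add_sub_cancel,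
            if_neg (Nat.succ_ne_zero s)]
          ring
    _ = _ := by
        rw [Finset.sum_sub_distrib, ← hH, h1, ← Finset.sum_sub_distrib]
        exact Finset.sum_congr rfl fun j _ => by ring

/-- `Σ_{j=0}^d (-1)^j C(d,j) C_{n-2j}^d(u) = Σ_{j=0}^{d-1} (-1)^j C(d-1,j) Z_{n-2j}^{d-1}(u)`. -/
theorem stmt2 (d : ℕ) (hd : 2 ≤ d) (n : ℕ) (u : ℝ) :
    ∑ j ∈ Finset.range (d + 1), (-1 : ℝ) ^ j * (d.choose j) * gegen d ((n : ℤ) - 2 * j) u =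
      ∑ j ∈ Finset.range d,
        (-1 : ℝ) ^ j * ((d - 1).choose j) * Zgegen ((d : ℝ) - 1) ((n : ℤ) - 2 * j) u := by
  obtain ⟨e, rfl⟩ : ∃ e, d = e + 2 := ⟨d - 2, by omega⟩
  have hl : (((e+2:ℕ):ℝ) - 1) ≠ 0 := by
    push_cast; intro h; nlinarith [Nat.cast_nonneg (α := ℝ) e]
  set g : ℕ → ℝ := fun j => gegen ((e+2:ℕ):ℝ) ((n:ℤ) - 2*j) u with hg
  have hrhs : ∀ j ∈ Finset.range (e+2),
      (-1:ℝ)^j * (((e+1).choose j : ℕ) : ℝ) * Zgegen (((e+2:ℕ):ℝ) - 1) ((n:ℤ) - 2*j) u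
        = (-1:ℝ)^j * ((e+1).choose j : ℝ) * (g j - g (j+1)) := by
    intro j _
    have hz := zkey (((e+2:ℕ):ℝ) - 1) u hl ((n:ℤ) - 2*j)
    rw [show (((e+2:ℕ):ℝ) - 1) + 1 = ((e+2:ℕ):ℝ) from by ring] at hz
    rw [hz, hg]
    have h5 : ((n:ℤ) - 2*j - 2) = ((n:ℤ) - 2*(j+1)) := by push_cast; ring
    rw [h5]
    push_cast
    ring
  have hsub : (e + 2 - 1) = e + 1 := by omega
  rw [hsub, Finset.sum_congr rfl hrhs]
  have ht := telescope (e+1) g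
  rw [show e + 1 + 2 = e + 2 + 1 from by ring, show e + 1 + 1 = e + 2 from by ring] at ht
  exact ht
end
end

section
/- For every integer d ≥ 2 and every n ∈ ℕ, N_d(n) = h_{n,d}(1)/(d−1)!; equivalently, N_d(n) = Σ_{j=0}^{min(d,⌊n/2⌋)} (−d)_j (2d)_{n−2j} / (j! (n−2j)!). -/
open MeasureTheory Real Filter

noncomputable section

set_option linter.unreachableTactic false
set_option linter.unusedTactic false

lemma mem_l1Sphere {d n : ℕ} {α : Fin d → ℤ} : α ∈ l1Sphere d n ↔ ∑ i, |α i| = (n : ℤ) := by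
  constructor
  · intro h; exact (Finset.mem_filter.mp h).2
  · intro h
    refine Finset.mem_filter.mpr ⟨Finset.mem_Icc.mpr ⟨fun i => ?_, fun i => ?_⟩, h⟩ <;>
      have h1 : |α i| ≤ (n : ℤ) := h ▸ Finset.single_le_sum (f := fun i => |α i|)
        (fun j _ => abs_nonneg _) (Finset.mem_univ i)
    · show -(n : ℤ) ≤ α i
      have := neg_abs_le (α i); omega
    · show α i ≤ (n : ℤ)
      have := le_abs_self (α i); omega

lemma l1Sphere_zero_eq (n : ℕ) (hn : 0 < n) : l1Sphere 0 n = ∅ := by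
  ext α
  simp only [mem_l1Sphere, Finset.notMem_empty, iff_false, Finset.univ_eq_empty,
    Finset.sum_empty]
  omega

lemma Nd_zero (n : ℕ) : Nd 0 n = if n = 0 then 1 else 0 := by
  unfold Nd
  rcases Nat.eq_zero_or_pos n with h | h
  · subst h
    rw [if_pos rfl, Finset.card_eq_one]
    exact ⟨fun i => i.elim0, by ext α; simp [mem_l1Sphere, funext_iff, Fin.forall_iff]⟩
  · rw [if_neg (by omega), l1Sphere_zero_eq n h, Finset.card_empty]

lemma Nd_one (n : ℕ) : Nd 1 n = if n = 0 then 1 else 2 := by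
  unfold Nd
  rcases Nat.eq_zero_or_pos n with h | h
  · subst h
    rw [if_pos rfl, Finset.card_eq_one]
    refine ⟨fun _ => 0, ?_⟩
    ext α
    simp only [mem_l1Sphere, Fin.sum_univ_one, Finset.mem_singleton, Nat.cast_zero,
      abs_eq_zero, funext_iff]
    constructor
    · intro h i; have := Fin.eq_zero i; subst this; exact h
    · intro h; exact h 0
  · rw [if_neg (by omega)]
    have he : l1Sphere 1 n = {fun _ => (n:ℤ), fun _ => -(n:ℤ)} := by
      ext α
      simp only [mem_l1Sphere, Fin.sum_univ_one, Finset.mem_insert, Finset.mem_singleton]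
      constructor
      · intro habs
        rcases (abs_eq (by positivity : (0:ℤ) ≤ (n:ℤ))).mp habs with h1 | h1
        · left; funext i; have := Fin.eq_zero i; subst this; exact h1
        · right; funext i; have := Fin.eq_zero i; subst this; exact h1
      · rintro (h1 | h1) <;> subst h1 <;> simp
    rw [he, Finset.card_insert_of_notMem, Finset.card_singleton]
    simp only [Finset.mem_singleton, funext_iff, not_forall]
    exact ⟨0, by omega⟩

lemma Nd_succ (d n : ℕ) : Nd (d + 1) n = ∑ l ∈ Finset.range (n + 1), Nd 1 l * Nd d (n - l) := by
  unfold Nd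
  have hmem : ∀ α ∈ l1Sphere (d+1) n,
      (α (Fin.last d)).natAbs ∈ Finset.range (n+1) := by
    intro α hα
    rw [Finset.mem_range]
    rw [mem_l1Sphere] at hα
    have h1 : |α (Fin.last d)| ≤ (n : ℤ) := hα ▸ Finset.single_le_sum (f := fun i => |α i|)
      (fun j _ => abs_nonneg _) (Finset.mem_univ _)
    rw [Int.abs_eq_natAbs] at h1
    omega
  rw [Finset.card_eq_sum_card_fiberwise hmem]
  · refine Finset.sum_congr rfl fun l hl => ?_
    rw [Finset.mem_range] at hl
    have hln : l ≤ n := by omega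
    rw [← Finset.card_product]
    apply Finset.card_bij'
      (i := fun (α : Fin (d+1) → ℤ) _ => ((fun _ => α (Fin.last d)), Fin.init α))
      (j := fun (p : (Fin 1 → ℤ) × (Fin d → ℤ)) _ => Fin.snoc p.2 (p.1 0))
    · rintro α hα
      rw [Finset.mem_filter] at hα
      obtain ⟨hα1, hα2⟩ := hα
      rw [mem_l1Sphere, Fin.sum_univ_castSucc] at hα1
      rw [Finset.mem_product]
      constructor
      · rw [mem_l1Sphere, Fin.sum_univ_one]
        rw [Int.abs_eq_natAbs, hα2]
      · rw [mem_l1Sphere]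
        have h2 : |α (Fin.last d)| = (l : ℤ) := by rw [Int.abs_eq_natAbs, hα2]
        have hsum : ∑ i : Fin d, |Fin.init α i| = (n : ℤ) - l := by
          simp only [Fin.init]
          omega
        rw [hsum, Nat.cast_sub hln]
    · rintro p hp
      rw [Finset.mem_product, mem_l1Sphere, mem_l1Sphere, Fin.sum_univ_one] at hp
      obtain ⟨hp1, hp2⟩ := hp
      rw [Finset.mem_filter]
      constructor
      · rw [mem_l1Sphere, Fin.sum_univ_castSucc]
        simp only [Fin.snoc_castSucc, Fin.snoc_last]
        rw [hp2, hp1, Nat.cast_sub hln]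
        ring
      · simp only [Fin.snoc_last]
        have : ((p.1 0).natAbs : ℤ) = l := by rw [← Int.abs_eq_natAbs, hp1]
        exact_mod_cast this
    · intro α hα
      simp only
      exact Fin.snoc_init_self α
    · intro p hp
      ext x
      · simp only [Fin.snoc_last]
        exact congrArg _ (Subsingleton.elim 0 x)
      · simp only
        rw [Fin.init_snoc]

open PowerSeries in
def NX (d : ℕ) : PowerSeries ℝ := PowerSeries.mk fun n => (Nd d n : ℝ)

open PowerSeries

lemma NX_zero : NX 0 = 1 := by
  ext n
  rw [NX, coeff_mk, coeff_one, Nd_zero]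
  push_cast [apply_ite (fun m : ℕ => (m : ℝ))]
  rfl

lemma NX_succ (d : ℕ) : NX (d + 1) = NX 1 * NX d := by
  ext n
  rw [NX, coeff_mk, coeff_mul]
  rw [Finset.Nat.sum_antidiagonal_eq_sum_range_succ_mk]
  simp only [NX, coeff_mk]
  rw [Nd_succ]
  push_cast
  rfl

lemma NX_one_mul : NX 1 * (1 - X) = 1 + X := by
  ext n
  rw [mul_sub, mul_one, map_sub, map_add, coeff_one, coeff_X,
    ← pow_one (X : ℝ⟦X⟧), coeff_mul_X_pow', NX, coeff_mk]
  match n with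
  | 0 => simp [Nd_one]
  | 1 => simp [Nd_one]; norm_num
  | (k+2) => simp [Nd_one]

lemma NX_pow (d : ℕ) : NX d * (1 - X) ^ d = (1 + X) ^ d := by
  induction d with
  | zero => simp [NX_zero]
  | succ d ih =>
      rw [NX_succ, pow_succ, pow_succ]
      calc NX 1 * NX d * ((1 - X) ^ d * (1 - X))
          = (NX 1 * (1 - X)) * (NX d * (1 - X) ^ d) := by ring
        _ = (1 + X) ^ d * (1 + X) := by rw [NX_one_mul, ih]; ring

/-- The Gegenbauer value at `t = 1`, as an explicit sum. -/
def gval (lam : ℝ) (m : ℕ) : ℝ :=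
  ∑ k ∈ Finset.range (m / 2 + 1),
    (-1 : ℝ) ^ k * (ascPochhammer ℝ (m - k)).eval lam * 2 ^ (m - 2 * k) /
      ((k.factorial : ℝ) * (m - 2 * k).factorial)

lemma asc_eval_shift (x : ℝ) (j : ℕ) :
    (ascPochhammer ℝ (j + 1)).eval x = x * (ascPochhammer ℝ j).eval (x + 1) := by
  rw [ascPochhammer_succ_left]
  simp [Polynomial.eval_comp]

lemma fact_cast_ne (k : ℕ) : ((k.factorial : ℝ)) ≠ 0 :=
  Nat.cast_ne_zero.mpr (Nat.factorial_ne_zero _)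

lemma keyA (lam : ℝ) (p : ℕ) :
    (-1:ℝ)^0 * (ascPochhammer ℝ (p+1)).eval (lam+1) * 2^(p+1) /
        ((Nat.factorial 0 : ℝ) * (p+1).factorial)
      - 2 * ((-1:ℝ)^0 * (ascPochhammer ℝ p).eval (lam+1) * 2^p /
        ((Nat.factorial 0 : ℝ) * p.factorial))
    = (-1:ℝ)^0 * (ascPochhammer ℝ (p+1)).eval lam * 2^(p+1) /
        ((Nat.factorial 0 : ℝ) * (p+1).factorial) := by
  rw [ascPochhammer_succ_eval, asc_eval_shift]
  have h1 : ((p+1).factorial : ℝ) = (p+1) * p.factorial := by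
    rw [Nat.factorial_succ]; push_cast; ring
  rw [h1]
  have h2 := fact_cast_ne p
  have h3 : ((p:ℝ) + 1) ≠ 0 := by positivity
  field_simp
  ring

lemma keyB (lam : ℝ) (k p : ℕ) :
    (-1:ℝ)^(k+1) * (ascPochhammer ℝ (k+p+2)).eval (lam+1) * 2^(p+1) /
        (((k+1).factorial : ℝ) * (p+1).factorial)
      - 2 * ((-1:ℝ)^(k+1) * (ascPochhammer ℝ (k+p+1)).eval (lam+1) * 2^p /
        (((k+1).factorial : ℝ) * p.factorial))
      + (-1:ℝ)^k * (ascPochhammer ℝ (k+p+1)).eval (lam+1) * 2^(p+1) /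
        ((k.factorial : ℝ) * (p+1).factorial)
    = (-1:ℝ)^(k+1) * (ascPochhammer ℝ (k+p+2)).eval lam * 2^(p+1) /
        (((k+1).factorial : ℝ) * (p+1).factorial) := by
  have e1 : (ascPochhammer ℝ (k+p+2)).eval (lam+1)
      = (ascPochhammer ℝ (k+p+1)).eval (lam+1) * ((lam+1) + (k+p+1)) := by
    have := ascPochhammer_succ_eval (S := ℝ) (k+p+1) (lam+1)
    push_cast at this ⊢
    convert this using 3 <;> ring
  have e2 : (ascPochhammer ℝ (k+p+2)).eval lam
      = lam * (ascPochhammer ℝ (k+p+1)).eval (lam+1) := asc_eval_shift lam (k+p+1)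
  rw [e1, e2]
  have hk : ((k+1).factorial : ℝ) = (k+1) * k.factorial := by
    rw [Nat.factorial_succ]; push_cast; ring
  have hp : ((p+1).factorial : ℝ) = (p+1) * p.factorial := by
    rw [Nat.factorial_succ]; push_cast; ring
  rw [hk, hp, pow_succ]
  have h2 := fact_cast_ne p
  have h3 := fact_cast_ne k
  have h4 : ((p:ℝ) + 1) ≠ 0 := by positivity
  have h5 : ((k:ℝ) + 1) ≠ 0 := by positivity
  field_simp
  ring

lemma keyC (lam : ℝ) (k : ℕ) :
    (-1:ℝ)^(k+1) * (ascPochhammer ℝ (k+1)).eval (lam+1) * 2^0 /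
        (((k+1).factorial : ℝ) * (Nat.factorial 0))
      - 2 * 0
      + (-1:ℝ)^k * (ascPochhammer ℝ k).eval (lam+1) * 2^0 /
        ((k.factorial : ℝ) * (Nat.factorial 0))
    = (-1:ℝ)^(k+1) * (ascPochhammer ℝ (k+1)).eval lam * 2^0 /
        (((k+1).factorial : ℝ) * (Nat.factorial 0)) := by
  rw [ascPochhammer_succ_eval, asc_eval_shift]
  have hk : ((k+1).factorial : ℝ) = (k+1) * k.factorial := by
    rw [Nat.factorial_succ]; push_cast; ring
  rw [hk, pow_succ]
  have h3 := fact_cast_ne k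
  have h5 : ((k:ℝ) + 1) ≠ 0 := by positivity
  field_simp
  ring

lemma gval_rec (lam : ℝ) (m : ℕ) :
    gval (lam+1) (m+2) - 2 * gval (lam+1) (m+1) + gval (lam+1) m = gval lam (m+2) := by
  have h2 : (m+2)/2 + 1 = m/2 + 2 := by omega
  have h1ext : gval (lam+1) (m+1) = ∑ k ∈ Finset.range (m/2+2),
      (if 2*k ≤ m+1 then (-1:ℝ)^k * (ascPochhammer ℝ (m+1-k)).eval (lam+1) * 2^(m+1-2*k) /
        ((k.factorial : ℝ) * (m+1-2*k).factorial) else 0) := by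
    rw [gval]
    calc ∑ k ∈ Finset.range ((m+1)/2+1),
        (-1:ℝ)^k * (ascPochhammer ℝ (m+1-k)).eval (lam+1) * 2^(m+1-2*k) /
          ((k.factorial : ℝ) * (m+1-2*k).factorial)
        = ∑ k ∈ Finset.range ((m+1)/2+1),
          (if 2*k ≤ m+1 then (-1:ℝ)^k * (ascPochhammer ℝ (m+1-k)).eval (lam+1) * 2^(m+1-2*k) /
            ((k.factorial : ℝ) * (m+1-2*k).factorial) else 0) := by
          refine Finset.sum_congr rfl fun k hk => ?_
          rw [Finset.mem_range] at hk
          rw [if_pos (by omega)]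
      _ = _ := by
          refine Finset.sum_subset (Finset.range_subset_range.mpr (by omega : (m+1)/2+1 ≤ m/2+2))
            fun k hk1 hk2 => ?_
          rw [Finset.mem_range] at hk1 hk2
          rw [if_neg (by omega)]
  have h0ext : (∑ k ∈ Finset.range (m/2+2),
      (if 1 ≤ k then (-1:ℝ)^k * (ascPochhammer ℝ (m-(k-1))).eval (lam+1) * 2^(m-2*(k-1)) /
        (((k-1).factorial : ℝ) * (m-2*(k-1)).factorial) * (-1) else 0))
      = gval (lam+1) m := by
    rw [Finset.sum_range_succ', gval]
    simp only [Nat.add_sub_cancel, if_neg (by omega : ¬ (1:ℕ) ≤ 0), add_zero,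
      if_pos (by omega : ∀ {i : ℕ}, 1 ≤ i + 1)]
    refine Finset.sum_congr rfl fun k hk => ?_
    rw [if_pos (by omega : 1 ≤ k + 1)]
    ring
  rw [h1ext, ← h0ext, gval, gval, h2, Finset.mul_sum, ← Finset.sum_sub_distrib,
    ← Finset.sum_add_distrib]
  refine Finset.sum_congr rfl fun k hk => ?_
  rw [Finset.mem_range] at hk
  rcases k with _ | k
  · rw [if_pos (by omega : 2*0 ≤ m+1), if_neg (by omega : ¬ (1:ℕ) ≤ 0)]
    simp only [Nat.sub_zero, Nat.mul_zero]
    linear_combination keyA lam (m+1)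
  · by_cases hcase : 2*(k+1) ≤ m+1
    · obtain ⟨p, hp⟩ : ∃ p, m+1 = 2*k+2+p := ⟨m+1-(2*k+2), by omega⟩
      rw [if_pos hcase, if_pos (by omega : 1 ≤ k+1)]
      rw [show m+2-(k+1) = k+p+2 by omega, show m+2-2*(k+1) = p+1 by omega,
        show m+1-(k+1) = k+p+1 by omega, show m+1-2*(k+1) = p by omega,
        show (k+1)-1 = k by omega, show m-k = k+p+1 by omega, show m-2*k = p+1 by omega]
      linear_combination keyB lam k p
    · have hm : m = 2*k := by omega
      rw [if_neg hcase, if_pos (by omega : 1 ≤ k+1)]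
      rw [show m+2-(k+1) = k+1 by omega, show m+2-2*(k+1) = 0 by omega,
        show (k+1)-1 = k by omega, show m-k = k by omega, show m-2*k = 0 by omega]
      linear_combination keyC lam k

def GX (lam : ℝ) : PowerSeries ℝ := PowerSeries.mk fun m => gval lam m

lemma gval_zero_left (m : ℕ) : gval 0 m = if m = 0 then 1 else 0 := by
  rcases Nat.eq_zero_or_pos m with h | h
  · subst h; simp [gval]
  · rw [if_neg (by omega), gval]
    refine Finset.sum_eq_zero fun k hk => ?_
    rw [Finset.mem_range] at hk
    rw [ascPochhammer_eval_zero, if_neg (by omega : ¬ m - k = 0)]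
    ring

lemma gval_zero : gval 0 0 = 1 := by simp [gval]

lemma gval_zero' (mu : ℝ) : gval mu 0 = 1 := by simp [gval]

lemma gval_one (mu : ℝ) : gval mu 1 = 2 * mu := by
  simp [gval, ascPochhammer_one]
  norm_num [Finset.sum_range_succ]
  ring

lemma GX_step (lam : ℝ) : GX (lam + 1) * (1 - X) ^ 2 = GX lam := by
  have hexp : GX (lam + 1) * (1 - X) ^ 2
      = GX (lam + 1) - (GX (lam + 1) * X ^ 1 + GX (lam + 1) * X ^ 1) + GX (lam + 1) * X ^ 2 := by
    ring
  ext n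
  rw [hexp, map_add, map_sub, map_add, coeff_mul_X_pow', coeff_mul_X_pow']
  simp only [GX, coeff_mk]
  match n with
  | 0 =>
      rw [if_neg (by omega : ¬ 1 ≤ 0), if_neg (by omega : ¬ 2 ≤ 0), gval_zero' (lam+1),
        gval_zero' lam]
      norm_num
  | 1 =>
      rw [if_pos (by omega : 1 ≤ 1), if_neg (by omega : ¬ 2 ≤ 1),
        show (1:ℕ) - 1 = 0 from rfl, gval_zero' (lam+1), gval_one (lam+1), gval_one lam]
      ring
  | (m+2) =>
      rw [if_pos (by omega : 1 ≤ m + 2), if_pos (by omega : 2 ≤ m + 2),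
        show m + 2 - 1 = m + 1 from rfl, show m + 2 - 2 = m from rfl]
      linear_combination gval_rec lam m

lemma GX_zero : GX 0 = 1 := by
  ext n
  rw [GX, coeff_mk, coeff_one, gval_zero_left]

lemma GX_inv (d : ℕ) : GX (d : ℝ) * (1 - X) ^ (2 * d) = 1 := by
  induction d with
  | zero => simp [GX_zero]
  | succ d ih =>
      have : GX ((d+1 : ℕ) : ℝ) = GX ((d : ℝ) + 1) := by push_cast; ring_nf
      rw [this, show 2 * (d + 1) = 2 + 2 * d by ring, pow_add, ← mul_assoc,
        GX_step, ih]

lemma BX_inv (d : ℕ) (hd : 1 ≤ d) :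
    (PowerSeries.mk fun m => ((2*d-1 + m).choose (2*d-1) : ℝ)) * (1 - X) ^ (2*d) = 1 := by
  have h := mk_add_choose_mul_one_sub_pow_eq_one (S := ℝ) (d := 2*d-1)
  rwa [show 2*d-1+1 = 2*d by omega] at h

lemma GX_eq (d : ℕ) (hd : 1 ≤ d) :
    GX (d : ℝ) = PowerSeries.mk fun m => ((2*d-1 + m).choose (2*d-1) : ℝ) := by
  have h1 := GX_inv d
  have h2 := BX_inv d hd
  calc GX (d:ℝ) = GX (d:ℝ) * ((PowerSeries.mk fun m => ((2*d-1 + m).choose (2*d-1) : ℝ))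
        * (1 - X) ^ (2*d)) := by rw [h2, mul_one]
    _ = (GX (d:ℝ) * (1 - X) ^ (2*d)) * PowerSeries.mk fun m => ((2*d-1 + m).choose (2*d-1) : ℝ) := by
        ring
    _ = _ := by rw [h1, one_mul]

lemma one_sub_X_ne : (1 - X : ℝ⟦X⟧) ≠ 0 := by
  intro h
  have := congrArg (constantCoeff) h
  simp at this

lemma NX_master (d : ℕ) : NX d = (1 - X ^ 2) ^ d * GX (d : ℝ) := by
  refine mul_right_cancel₀ (pow_ne_zero d one_sub_X_ne) ?_
  calc NX d * (1 - X) ^ d = (1 + X) ^ d := NX_pow d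
    _ = (1 + X) ^ d * (GX (d:ℝ) * (1 - X) ^ (2*d)) := by rw [GX_inv, mul_one]
    _ = (1 - X ^ 2) ^ d * GX (d:ℝ) * (1 - X) ^ d := by
        rw [show ((1:ℝ⟦X⟧) - X ^ 2) = (1 - X) * (1 + X) by ring, mul_pow,
          show 2*d = d + d by ring, pow_add]
        ring

lemma coeff_onesubXsq_mul (d n : ℕ) (F : ℝ⟦X⟧) :
    coeff n ((1 - X ^ 2) ^ d * F) = ∑ j ∈ Finset.range (d+1),
      (-1:ℝ)^j * (d.choose j) * (if 2*j ≤ n then coeff (n - 2*j) F else 0) := by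
  have hpow : ((1:ℝ⟦X⟧) - X ^ 2) ^ d
      = ∑ j ∈ Finset.range (d+1), (-(X^2))^j * 1^(d-j) * (d.choose j : ℝ⟦X⟧) := by
    rw [show ((1:ℝ⟦X⟧) - X ^ 2) = -(X^2) + 1 by ring, add_pow]
  rw [hpow, Finset.sum_mul, map_sum]
  refine Finset.sum_congr rfl fun j hj => ?_
  have h1 : (-(X^2) : ℝ⟦X⟧)^j * 1^(d-j) * (d.choose j : ℝ⟦X⟧) * F
      = (PowerSeries.C ((-1)^j * (d.choose j : ℝ))) * (F * X^(2*j)) := by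
    rw [map_mul, map_pow, map_neg, map_one, map_natCast]
    rw [neg_pow (X^2 : ℝ⟦X⟧) j, ← pow_mul]
    ring
  rw [h1, coeff_C_mul, coeff_mul_X_pow']

lemma Nd_eq_sum_gval (d n : ℕ) :
    (Nd d n : ℝ) = ∑ j ∈ Finset.range (d+1),
      (-1:ℝ)^j * (d.choose j) * (if 2*j ≤ n then gval (d:ℝ) (n - 2*j) else 0) := by
  have h := congrArg (coeff n) (NX_master d)
  rw [NX, coeff_mk, coeff_onesubXsq_mul] at h
  rw [h]
  refine Finset.sum_congr rfl fun j hj => ?_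
  rw [GX, coeff_mk]

lemma Nd_eq_sum_choose (d n : ℕ) (hd : 1 ≤ d) :
    (Nd d n : ℝ) = ∑ j ∈ Finset.range (d+1),
      (-1:ℝ)^j * (d.choose j) *
        (if 2*j ≤ n then ((2*d-1 + (n - 2*j)).choose (2*d-1) : ℝ) else 0) := by
  have h := congrArg (coeff n) (NX_master d)
  rw [NX, coeff_mk, coeff_onesubXsq_mul, GX_eq d hd] at h
  rw [h]
  refine Finset.sum_congr rfl fun j hj => ?_
  rw [coeff_mk]

lemma gegen_natCast_s3 (lam : ℝ) (m : ℕ) : gegen lam (m : ℤ) 1 = gval lam m := by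
  rw [gegen, if_pos (Int.natCast_nonneg m)]
  simp only [Int.toNat_natCast]
  unfold gval
  norm_num

lemma hnd_eq (d n : ℕ) : hnd d n 1 = (d - 1).factorial * (Nd d n) := by
  rw [hnd, Nd_eq_sum_gval d n]
  congr 1
  refine Finset.sum_congr rfl fun j hj => ?_
  by_cases h : 2 * j ≤ n
  · rw [if_pos h, show (n:ℤ) - 2 * (j:ℕ) = ((n - 2*j : ℕ) : ℤ) by omega, gegen_natCast_s3]
  · rw [if_neg h, gegen, if_neg (by push_cast; omega)]

lemma asc_eval_neg_nat (d : ℕ) :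
    ∀ j, j ≤ d → (ascPochhammer ℝ j).eval (-(d:ℝ)) = (-1:ℝ)^j * j.factorial * d.choose j := by
  intro j
  induction j with
  | zero => intro _; simp
  | succ j ih =>
      intro h
      rw [ascPochhammer_succ_eval, ih (by omega)]
      have hc := Nat.choose_succ_right_eq d j
      have hcast : (d.choose (j+1) : ℝ) * ((j:ℝ)+1) = (d.choose j : ℝ) * ((d:ℝ) - j) := by
        have := congrArg (fun x : ℕ => (x : ℝ)) hc
        push_cast [Nat.cast_sub (by omega : j ≤ d)] at this
        linarith [this]
      rw [Nat.factorial_succ]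
      push_cast
      linear_combination ((-1:ℝ)^j * (j.factorial:ℝ)) * hcast

lemma asc_eval_two_mul (d m : ℕ) (hd : 1 ≤ d) :
    (ascPochhammer ℝ m).eval (2*(d:ℝ)) = (m.factorial : ℝ) * ((2*d-1 + m).choose (2*d-1)) := by
  have h0 : (2*(d:ℝ)) = ((2*d : ℕ) : ℝ) := by push_cast; ring
  rw [h0, ← ascPochhammer_eval_cast, ascPochhammer_nat_eq_ascFactorial,
    Nat.ascFactorial_eq_factorial_mul_choose']
  have h1 : (2*d + m - 1).choose m = (2*d-1 + m).choose (2*d-1) := by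
    have h2 := Nat.choose_symm (Nat.le_add_left m (2*d-1))
    rw [show 2*d-1+m-m = 2*d-1 by omega] at h2
    rw [show 2*d + m - 1 = 2*d - 1 + m by omega]
    exact h2.symm
  rw [h1]
  push_cast
  ring

/-- `N_d(n) = h_{n,d}(1)/(d-1)!` and
`N_d(n) = Σ_{j=0}^{min(d,⌊n/2⌋)} (-d)_j (2d)_{n-2j} / (j! (n-2j)!)`. -/
theorem stmt3 (d : ℕ) (hd : 2 ≤ d) (n : ℕ) :
    (Nd d n : ℝ) = hnd d n 1 / (d - 1).factorial ∧
    (Nd d n : ℝ) = ∑ j ∈ Finset.range (min d (n / 2) + 1),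
      (ascPochhammer ℝ j).eval (-(d : ℝ)) * (ascPochhammer ℝ (n - 2 * j)).eval (2 * (d : ℝ)) /
        ((j.factorial : ℝ) * (n - 2 * j).factorial) := by
  have hd1 : 1 ≤ d := by omega
  constructor
  · rw [hnd_eq d n, mul_comm, mul_div_assoc, div_self (fact_cast_ne _), mul_one]
  · rw [Nd_eq_sum_choose d n hd1]
    have hsub : Finset.range (min d (n/2) + 1) ⊆ Finset.range (d+1) :=
      Finset.range_subset_range.mpr (by omega)
    have hv : ∀ j ∈ Finset.range (d+1), j ∉ Finset.range (min d (n/2) + 1) →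
        (-1:ℝ)^j * (d.choose j) *
          (if 2*j ≤ n then ((2*d-1 + (n - 2*j)).choose (2*d-1) : ℝ) else 0) = 0 := by
      intro j hj1 hj2
      rw [Finset.mem_range] at hj1
      rw [Finset.mem_range, not_lt] at hj2
      rw [if_neg (by omega), mul_zero]
    rw [← Finset.sum_subset hsub hv]
    refine Finset.sum_congr rfl fun j hj => ?_
    rw [Finset.mem_range] at hj
    have hjd : j ≤ d := by omega
    have hjn : 2*j ≤ n := by omega
    rw [if_pos hjn, asc_eval_neg_nat d j hjd, asc_eval_two_mul d _ hd1]
    rw [eq_div_iff (mul_ne_zero (fact_cast_ne _) (fact_cast_ne _))]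
    ring
end
end

section
/- Let d ≥ 2 be an integer, 0 ≤ r < 1, and θ = (θ_1,…,θ_d) ∈ ℝ^d be such that cos θ_1, …, cos θ_d are pairwise distinct. Then (d−1)! ∫_{−1}^{1} (1 − 2ru + r²)^{−d} M_{d−1}(u | cos θ_1,…,cos θ_d) du = ∏_{i=1}^{d} (1 − 2r cos θ_i + r²)^{−1}. -/
open MeasureTheory Real Filter

noncomputable section

lemma divDiff_step (k : ℕ) (x : Fin (k+2) → ℝ) (f : ℝ → ℝ) :
    divDiff (k+2) x f = (divDiff (k+1) (fun i => x i.castSucc) f -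
      divDiff (k+1) (fun i => x i.succ) f) / (x 0 - x (Fin.last (k+1))) := rfl


lemma divDiff_congr : ∀ (k : ℕ) (x : Fin k → ℝ) (f g : ℝ → ℝ),
    (∀ i, f (x i) = g (x i)) → divDiff k x f = divDiff k x g
  | 0, _, _, _, _ => rfl
  | 1, x, f, g, h => h 0
  | k + 2, x, f, g, h => by
      rw [divDiff_step, divDiff_step,
        divDiff_congr (k+1) (fun i => x i.castSucc) f g (fun i => h i.castSucc),
        divDiff_congr (k+1) (fun i => x i.succ) f g (fun i => h i.succ)]

lemma divDiff_const_mul : ∀ (k : ℕ) (x : Fin k → ℝ) (c : ℝ) (f : ℝ → ℝ),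
    divDiff k x (fun t => c * f t) = c * divDiff k x f
  | 0, _, c, _ => by simp [divDiff]
  | 1, x, c, f => rfl
  | k + 2, x, c, f => by
      rw [divDiff_step, divDiff_step, divDiff_const_mul (k+1), divDiff_const_mul (k+1)]
      ring

lemma ne_last_of_inj {n : ℕ} {Y : Fin (n+2) → ℝ} (hY : Function.Injective Y) :
    Y 0 ≠ Y (Fin.last (n+1)) := by
  intro h
  have := hY h
  simp [Fin.ext_iff] at this

lemma divDiff_sub_eq (n : ℕ) (Y : Fin (n+1) → ℝ) (hY : Function.Injective Y) (f : ℝ → ℝ) :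
    divDiff n (fun i => Y i.castSucc) f - divDiff n (fun i => Y i.succ) f
      = divDiff (n+1) Y f * (Y 0 - Y (Fin.last n)) := by
  cases n with
  | zero => simp [divDiff, Fin.last]
  | succ j =>
      rw [divDiff_step, div_mul_cancel₀]
      exact sub_ne_zero_of_ne (ne_last_of_inj hY)

lemma divDiff_linear_mul : ∀ (k : ℕ) (x : Fin (k+1) → ℝ), Function.Injective x →
    ∀ (e : ℝ) (f : ℝ → ℝ),
    divDiff (k+1) x (fun t => (t - e) * f t)
      = divDiff k (fun i => x i.castSucc) f + (x (Fin.last k) - e) * divDiff (k+1) x f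
  | 0, x, _, e, f => by simp [divDiff, Fin.last]
  | (n+1), x, hx, e, f => by
      have hXf : Function.Injective (fun i : Fin (n+1) => x i.castSucc) :=
        hx.comp (Fin.castSucc_injective _)
      have hXb : Function.Injective (fun i : Fin (n+1) => x i.succ) :=
        hx.comp (Fin.succ_injective _)
      rw [divDiff_step, divDiff_linear_mul n _ hXf e f, divDiff_linear_mul n _ hXb e f,
        divDiff_step]
      have hsub := divDiff_sub_eq n (fun i => x i.castSucc) hXf f
      have hne : x 0 - x (Fin.last (n+1)) ≠ 0 := sub_ne_zero_of_ne (ne_last_of_inj hx)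
      -- identify index juggling
      have e1 : (fun i : Fin n => (fun i : Fin (n+1) => x i.castSucc) i.succ)
          = fun i : Fin n => (fun i : Fin (n+1) => x i.succ) i.castSucc := by
        funext i; simp only [Fin.succ_castSucc]
      have e2 : x (Fin.last n).succ = x (Fin.last (n+1)) := by
        rw [Fin.succ_last]
      rw [e1] at hsub
      set A := divDiff n (fun i : Fin n => (fun i : Fin (n+1) => x i.castSucc) i.castSucc) f
      set Bm := divDiff n (fun i : Fin n => (fun i : Fin (n+1) => x i.succ) i.castSucc) f
      set F1 := divDiff (n+1) (fun i : Fin (n+1) => x i.castSucc) f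
      set G1 := divDiff (n+1) (fun i : Fin (n+1) => x i.succ) f
      rw [e2]
      have hsub' : A = Bm + F1 * (x 0 - x (Fin.last n).castSucc) := by
        have h0 : x (Fin.castSucc 0) = x 0 := by norm_num
        rw [h0] at hsub; linarith [hsub]
      rw [hsub']
      field_simp
      ring

lemma prod_front {n : ℕ} (x : Fin (n+2) → ℝ) (a b : ℝ) (h : ∀ i, a - b * x i ≠ 0) :
    (∏ i : Fin (n+1), (a - b * x i.castSucc)⁻¹)
      = (∏ i : Fin (n+2), (a - b * x i)⁻¹) * (a - b * x (Fin.last (n+1))) := by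
  rw [Fin.prod_univ_castSucc (f := fun i : Fin (n+2) => (a - b * x i)⁻¹)]
  rw [mul_assoc, inv_mul_cancel₀ (h _), mul_one]

lemma prod_back {n : ℕ} (x : Fin (n+2) → ℝ) (a b : ℝ) (h : ∀ i, a - b * x i ≠ 0) :
    (∏ i : Fin (n+1), (a - b * x i.succ)⁻¹)
      = (∏ i : Fin (n+2), (a - b * x i)⁻¹) * (a - b * x 0) := by
  rw [Fin.prod_univ_succ (f := fun i : Fin (n+2) => (a - b * x i)⁻¹)]
  rw [mul_comm ((a - b * x 0)⁻¹), mul_assoc, inv_mul_cancel₀ (h _), mul_one]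

lemma divDiff_inv_linear (a b : ℝ) : ∀ (k : ℕ) (x : Fin (k+1) → ℝ), Function.Injective x →
    (∀ i, a - b * x i ≠ 0) →
    divDiff (k+1) x (fun t => (a - b * t)⁻¹) = b ^ k * ∏ i, (a - b * x i)⁻¹
  | 0, x, _, _ => by simp [divDiff]
  | (n+1), x, hx, h => by
      have hXf : Function.Injective (fun i : Fin (n+1) => x i.castSucc) :=
        hx.comp (Fin.castSucc_injective _)
      have hXb : Function.Injective (fun i : Fin (n+1) => x i.succ) :=
        hx.comp (Fin.succ_injective _)
      rw [divDiff_step, divDiff_inv_linear a b n _ hXf (fun i => h _),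
        divDiff_inv_linear a b n _ hXb (fun i => h _),
        prod_front x a b h, prod_back x a b h]
      have hne : x 0 - x (Fin.last (n+1)) ≠ 0 := sub_ne_zero_of_ne (ne_last_of_inj hx)
      rw [div_eq_iff hne]; ring

lemma divDiff_pow_mul_inv_linear (a b e : ℝ) :
    ∀ (p k : ℕ) (x : Fin (k+1) → ℝ), Function.Injective x →
    (∀ i, a - b * x i ≠ 0) → p ≤ k →
    divDiff (k+1) x (fun t => (t - e) ^ p * (a - b * t)⁻¹)
      = (a - b * e) ^ p * b ^ (k - p) * ∏ i, (a - b * x i)⁻¹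
  | 0, k, x, hx, h, _ => by
      simp only [pow_zero, one_mul, Nat.sub_zero]
      rw [divDiff_inv_linear a b k x hx h]
  | (p+1), k, x, hx, h, hpk => by
      obtain ⟨j, rfl⟩ : ∃ j, k = j + 1 := ⟨k - 1, by omega⟩
      have hXf : Function.Injective (fun i : Fin (j+1) => x i.castSucc) :=
        hx.comp (Fin.castSucc_injective _)
      have hfun : (fun t => (t - e) ^ (p+1) * (a - b * t)⁻¹)
          = fun t => (t - e) * ((t - e) ^ p * (a - b * t)⁻¹) := by
        funext t; ring
      rw [hfun, divDiff_linear_mul (j+1) x hx,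
        divDiff_pow_mul_inv_linear a b e p j _ hXf (fun i => h _) (by omega),
        divDiff_pow_mul_inv_linear a b e p (j+1) x hx h (by omega),
        prod_front x a b h]
      have e1 : j + 1 - p = (j - p) + 1 := by omega
      have e2 : j + 1 - (p + 1) = j - p := by omega
      rw [e1, e2]
      ring

lemma divDiff_intervalIntegral (aa bb : ℝ) (F : ℝ → ℝ → ℝ) :
    ∀ (k : ℕ) (x : Fin k → ℝ), (∀ i, IntervalIntegrable (fun u => F (x i) u) volume aa bb) →
    IntervalIntegrable (fun u => divDiff k x (fun t => F t u)) volume aa bb ∧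
    divDiff k x (fun t => ∫ u in aa..bb, F t u) = ∫ u in aa..bb, divDiff k x (fun t => F t u)
  | 0, x, _ => by
      refine ⟨?_, by simp [divDiff]⟩
      simpa [divDiff] using intervalIntegrable_const (c := (0:ℝ)) (a := aa) (b := bb)
  | 1, x, hF => ⟨hF 0, rfl⟩
  | (n+2), x, hF => by
      have Hf := divDiff_intervalIntegral aa bb F (n+1) (fun i => x i.castSucc)
        (fun i => hF i.castSucc)
      have Hb := divDiff_intervalIntegral aa bb F (n+1) (fun i => x i.succ)
        (fun i => hF i.succ)
      have key : (fun u => divDiff (n+2) x fun t => F t u)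
          = fun u => (divDiff (n+1) (fun i => x i.castSucc) (fun t => F t u)
            - divDiff (n+1) (fun i => x i.succ) (fun t => F t u))
              / (x 0 - x (Fin.last (n+1))) := rfl
      constructor
      · rw [key]
        exact (Hf.1.sub Hb.1).div_const _
      · rw [divDiff_step, Hf.2, Hb.2, key,
          ← intervalIntegral.integral_sub Hf.1 Hb.1, ← intervalIntegral.integral_div]

/-- `(d-1)! ∫_{-1}^1 (1-2ru+r²)^{-d} M_{d-1}(u | cos θ₁,…,cos θ_d) du = Π_i (1-2r cos θ_i + r²)⁻¹`. -/
theorem stmt5 (d : ℕ) (hd : 2 ≤ d) (r : ℝ) (hr0 : 0 ≤ r) (hr1 : r < 1)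
    (θ : Fin d → ℝ) (hθ : Function.Injective fun i => Real.cos (θ i)) :
    (d - 1).factorial *
        ∫ u in (-1 : ℝ)..1,
          ((1 - 2 * r * u + r ^ 2) ^ d)⁻¹ * Mspline d (fun i => Real.cos (θ i)) u =
      ∏ i, (1 - 2 * r * Real.cos (θ i) + r ^ 2)⁻¹ := by
  obtain ⟨m, rfl⟩ : ∃ m, d = m + 2 := ⟨d - 2, by omega⟩
  set x : Fin (m+2) → ℝ := fun i => Real.cos (θ i) with hxdef
  have hx : Function.Injective x := hθ
  set a : ℝ := 1 + r ^ 2 with ha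
  set b : ℝ := 2 * r with hb
  -- positivity of q on [-1,1]
  have hqpos : ∀ u : ℝ, u ∈ Set.Icc (-1:ℝ) 1 → 0 < 1 - 2 * r * u + r ^ 2 := by
    intro u hu
    nlinarith [hu.2, sq_nonneg (1 - r), hu.1]
  have hxmem : ∀ i, x i ∈ Set.Icc (-1:ℝ) 1 := fun i =>
    ⟨Real.neg_one_le_cos _, Real.cos_le_one _⟩
  have hnz : ∀ i, a - b * x i ≠ 0 := by
    intro i
    have := hqpos (x i) (hxmem i)
    intro h; apply absurd this; rw [show (1:ℝ) - 2*r*(x i) + r^2 = a - b * x i by rw [ha, hb]; ring, h]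
    simp
  -- the parametrized integrand
  set F : ℝ → ℝ → ℝ := fun t u =>
    ((1 - 2 * r * u + r ^ 2) ^ (m+2))⁻¹ * (if u < t then (t - u) ^ m / m.factorial else 0)
    with hFdef
  -- continuity of the smooth part
  have hcont : ∀ X : ℝ, ContinuousOn
      (fun u => ((1 - 2 * r * u + r ^ 2) ^ (m+2))⁻¹ * ((X - u) ^ m / m.factorial))
      (Set.uIcc (-1:ℝ) 1) := by
    intro X
    have huIcc : Set.uIcc (-1:ℝ) 1 = Set.Icc (-1:ℝ) 1 := Set.uIcc_of_le (by norm_num)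
    apply ContinuousOn.mul
    · apply ContinuousOn.inv₀
      · fun_prop
      · intro u hu
        rw [huIcc] at hu
        exact pow_ne_zero _ (hqpos u hu).ne'
    · fun_prop
  -- integrability of F at the knots
  have hF : ∀ i, IntervalIntegrable (fun u => F (x i) u) volume (-1) 1 := by
    intro i
    have h1 : (fun u => F (x i) u) = Set.indicator (Set.Iio (x i))
        (fun u => ((1 - 2 * r * u + r ^ 2) ^ (m+2))⁻¹ * ((x i - u) ^ m / m.factorial)) := by
      funext u
      simp only [hFdef, Set.indicator_apply, Set.mem_Iio, mul_ite, mul_zero]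
    have h2 : IntervalIntegrable
        (fun u => ((1 - 2 * r * u + r ^ 2) ^ (m+2))⁻¹ * ((x i - u) ^ m / m.factorial))
        volume (-1) 1 := (hcont (x i)).intervalIntegrable
    rw [h1, intervalIntegrable_iff] at *
    exact h2.indicator measurableSet_Iio
  -- the closed form of the inner integral
  set g : ℝ → ℝ := fun t =>
    (((1 + 2*r + r^2) ^ (m+1) * ((m+1).factorial : ℝ))⁻¹) * ((t - (-1)) ^ (m+1) * (a - b * t)⁻¹)
    with hgdef
  have hGval : ∀ i, (∫ u in (-1:ℝ)..1, F (x i) u) = g (x i) := by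
    intro i
    set X := x i with hX
    have hXm := hxmem i
    have hqX : (1 - 2*r*X + r^2) ≠ 0 := (hqpos X hXm).ne'
    -- split the integral
    have hsub1 : Set.uIcc (-1:ℝ) X ⊆ Set.uIcc (-1:ℝ) 1 := by
      rw [Set.uIcc_of_le (by linarith [hXm.1] : (-1:ℝ) ≤ X), Set.uIcc_of_le (by norm_num : (-1:ℝ) ≤ 1)]
      exact Set.Icc_subset_Icc le_rfl hXm.2
    have hsub2 : Set.uIcc X (1:ℝ) ⊆ Set.uIcc (-1:ℝ) 1 := by
      rw [Set.uIcc_of_le hXm.2, Set.uIcc_of_le (by norm_num : (-1:ℝ) ≤ 1)]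
      exact Set.Icc_subset_Icc hXm.1 le_rfl
    have hi1 : IntervalIntegrable (fun u => F X u) volume (-1) X := (hF i).mono_set hsub1
    have hi2 : IntervalIntegrable (fun u => F X u) volume X 1 := (hF i).mono_set hsub2
    rw [← intervalIntegral.integral_add_adjacent_intervals hi1 hi2]
    -- second piece is zero
    have hzero : (∫ u in X..(1:ℝ), F X u) = 0 := by
      rw [intervalIntegral.integral_congr (g := fun _ => 0), intervalIntegral.integral_zero]
      intro u hu
      rw [Set.uIcc_of_le hXm.2] at hu
      simp only [hFdef]
      rw [if_neg (not_lt.2 hu.1), mul_zero]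
    rw [hzero, add_zero]
    -- first piece equals continuous version
    have hae : (∫ u in (-1:ℝ)..X, F X u) =
        ∫ u in (-1:ℝ)..X, ((1 - 2 * r * u + r ^ 2) ^ (m+2))⁻¹ * ((X - u) ^ m / m.factorial) := by
      apply intervalIntegral.integral_congr_ae
      have hne : ∀ᵐ u : ℝ ∂volume, u ≠ X := by
        rw [ae_iff]
        convert Real.volume_singleton (a := X) using 2
        ext u; simp
      filter_upwards [hne] with u hu hmem
      rw [Set.uIoc_of_le (by linarith [hXm.1] : (-1:ℝ) ≤ X)] at hmem
      have : u < X := lt_of_le_of_ne hmem.2 hu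
      simp only [hFdef]
      rw [if_pos this]
    rw [hae]
    -- FTC
    set c0 : ℝ := -(((1 - 2*r*X + r^2) * ((m+1).factorial : ℝ)))⁻¹ with hc0
    set B : ℝ → ℝ := fun u => c0 * ((X - u) ^ (m+1) * ((( 1 - 2*r*u + r^2)) ^ (m+1))⁻¹) with hB
    have hderiv : ∀ u ∈ Set.uIcc (-1:ℝ) X, HasDerivAt B
        (((1 - 2 * r * u + r ^ 2) ^ (m+2))⁻¹ * ((X - u) ^ m / m.factorial)) u := by
      intro u hu
      rw [Set.uIcc_of_le (by linarith [hXm.1] : (-1:ℝ) ≤ X)] at hu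
      have hqu : (1 - 2*r*u + r^2) ≠ 0 := (hqpos u ⟨hu.1, le_trans hu.2 hXm.2⟩).ne'
      have h1 : HasDerivAt (fun u : ℝ => X - u) (-1) u := by
        simpa using (hasDerivAt_id u).const_sub X
      have h2 : HasDerivAt (fun u : ℝ => (X - u) ^ (m+1))
          ((m+1 : ℕ) * (X - u) ^ m * (-1)) u := by
        have h2' : HasDerivAt (fun u : ℝ => (X - u) ^ (m+1))
            ((m+1 : ℕ) * (X - u) ^ (m+1-1) * (-1)) u := h1.pow (m+1)
        simpa using h2'
      have h3 : HasDerivAt (fun u : ℝ => 1 - 2*r*u + r^2) (-(2*r)) u := by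
        have := ((hasDerivAt_id u).const_mul (2*r)).const_sub 1
        simpa using this.add_const (r^2)
      have h4 : HasDerivAt (fun u : ℝ => ((1 - 2*r*u + r^2) ^ (m+1)))
          ((m+1 : ℕ) * (1 - 2*r*u + r^2) ^ m * (-(2*r))) u := by
        have h4' : HasDerivAt (fun u : ℝ => ((1 - 2*r*u + r^2) ^ (m+1)))
            ((m+1 : ℕ) * (1 - 2*r*u + r^2) ^ (m+1-1) * (-(2*r))) u := h3.pow (m+1)
        simpa using h4'
      have h5 : HasDerivAt (fun u : ℝ => ((1 - 2*r*u + r^2) ^ (m+1))⁻¹) _ u :=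
        h4.inv (pow_ne_zero _ hqu)
      have h6 : HasDerivAt B _ u := (h2.mul h5).const_mul c0
      convert h6 using 1
      rw [hc0]
      have hfac : ((m+1).factorial : ℝ) = (m+1) * (m.factorial : ℝ) := by
        rw [Nat.factorial_succ]; push_cast; ring
      have hmf : (m.factorial : ℝ) ≠ 0 := by positivity
      rw [hfac]
      field_simp [hfac]
      push_cast
      ring
    have hint : IntervalIntegrable
        (fun u => ((1 - 2 * r * u + r ^ 2) ^ (m+2))⁻¹ * ((X - u) ^ m / m.factorial))
        volume (-1) X := ((hcont X).mono hsub1).intervalIntegrable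
    rw [intervalIntegral.integral_eq_sub_of_hasDerivAt hderiv hint]
    -- evaluate
    rw [hB, hgdef]
    have hq1 : (1 - 2*r*(-1) + r^2) = 1 + 2*r + r^2 := by ring
    have hq1ne : (1 + 2*r + r^2) ≠ 0 := by nlinarith [sq_nonneg (1+r)]
    have hmf1 : (((m+1).factorial : ℝ)) ≠ 0 := by positivity
    simp only [hc0]
    rw [show X - X = 0 by ring, zero_pow (Nat.succ_ne_zero m), zero_mul, mul_zero, zero_sub]
    rw [show (1 - 2*r*(-1) + r^2) = 1 + 2*r + r^2 by ring]
    rw [show a - b * X = 1 - 2*r*X + r^2 by rw [ha, hb]; ring]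
    simp only [mul_inv]
    ring
  -- now the main computation
  have hMeq : ∀ u : ℝ, ((1 - 2 * r * u + r ^ 2) ^ (m+2))⁻¹ * Mspline (m+2) x u
      = divDiff (m+2) x (fun t => F t u) := by
    intro u
    rw [Mspline]
    simp only [Nat.add_sub_cancel]
    rw [← divDiff_const_mul]
  have hswap := divDiff_intervalIntegral (-1) 1 F (m+2) x hF
  calc ((m + 2 - 1).factorial : ℝ) *
        ∫ u in (-1 : ℝ)..1, ((1 - 2 * r * u + r ^ 2) ^ (m+2))⁻¹ * Mspline (m+2) x u
      = ((m+1).factorial : ℝ) * ∫ u in (-1:ℝ)..1, divDiff (m+2) x (fun t => F t u) := by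
        have hd1 : (m + 2 - 1).factorial = (m+1).factorial := rfl
        rw [hd1]
        congr 1
        exact intervalIntegral.integral_congr (fun u _ => hMeq u)
    _ = ((m+1).factorial : ℝ) * divDiff (m+2) x (fun t => ∫ u in (-1:ℝ)..1, F t u) := by
        rw [hswap.2]
    _ = ((m+1).factorial : ℝ) * divDiff (m+2) x g := by
        rw [divDiff_congr (m+2) x _ g (fun i => hGval i)]
    _ = ∏ i, (1 - 2 * r * Real.cos (θ i) + r ^ 2)⁻¹ := by
        rw [hgdef]
        rw [divDiff_const_mul (m+2) x _ (fun t => (t - (-1)) ^ (m+1) * (a - b * t)⁻¹)]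
        rw [divDiff_pow_mul_inv_linear a b (-1) (m+1) (m+1) x hx hnz le_rfl]
        have e1 : a - b * (-1) = 1 + 2*r + r^2 := by rw [ha, hb]; ring
        rw [e1, Nat.sub_self, pow_zero]
        have hq1ne : ((1:ℝ) + 2*r + r^2) ≠ 0 := by nlinarith [sq_nonneg (1+r)]
        have hmf1 : (((m+1).factorial : ℝ)) ≠ 0 := by positivity
        have hprod : ∏ i, (a - b * x i)⁻¹ = ∏ i, (1 - 2 * r * Real.cos (θ i) + r ^ 2)⁻¹ := by
          apply Finset.prod_congr rfl
          intro i _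
          rw [show a - b * x i = 1 - 2*r*(Real.cos (θ i)) + r^2 by rw [ha, hb, hxdef]; ring]
        rw [← hprod]
        have hqp : ((1:ℝ) + 2*r + r^2) ^ (m+1) ≠ 0 := pow_ne_zero _ hq1ne
        have hpne : (∏ i, (a - b * x i)) ≠ 0 := Finset.prod_ne_zero_iff.2 fun i _ => hnz i
        field_simp
end
end

section
/- Let d ≥ 2 be an integer, 0 ≤ r < 1, and θ = (θ_1,…,θ_d) ∈ ℝ^d be such that cos θ_1, …, cos θ_d are pairwise distinct. Let P_r(t) := 1/(1 − 2rt + r²). Then [cos θ_1, …, cos θ_d] P_r = (2r)^{d−1} / ∏_{i=1}^{d} (1 − 2r cos θ_i + r²). -/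
open MeasureTheory Real Filter

noncomputable section

lemma aux6 (r : ℝ) : ∀ (k : ℕ) (x : Fin (k+1) → ℝ), Function.Injective x →
    (∀ i, 1 - 2*r*x i + r^2 ≠ 0) →
    divDiff (k+1) x (fun t => 1/(1 - 2*r*t + r^2)) =
      (2*r)^k / ∏ i, (1 - 2*r*x i + r^2) := by
  intro k
  induction k with
  | zero =>
    intro x _ _
    simp [divDiff]
  | succ k ih =>
    intro x hinj hne
    have h1 := ih (fun i => x i.castSucc) (hinj.comp (Fin.castSucc_injective _)) (fun i => hne _)
    have h2 := ih (fun i => x i.succ) (hinj.comp (Fin.succ_injective _)) (fun i => hne _)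
    have hx : x 0 ≠ x (Fin.last (k+1)) := fun h => by
      have := hinj h
      simp [Fin.ext_iff] at this
    have hxne : x 0 - x (Fin.last (k+1)) ≠ 0 := sub_ne_zero.mpr hx
    have hPc : (∏ i : Fin (k+1), (1 - 2*r*x i.castSucc + r^2)) ≠ 0 :=
      Finset.prod_ne_zero_iff.mpr fun i _ => hne _
    have hPs : (∏ i : Fin (k+1), (1 - 2*r*x i.succ + r^2)) ≠ 0 :=
      Finset.prod_ne_zero_iff.mpr fun i _ => hne _
    have hsplit1 : (∏ i : Fin (k+2), (1 - 2*r*x i + r^2)) =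
        (∏ i : Fin (k+1), (1 - 2*r*x i.castSucc + r^2)) * (1 - 2*r*x (Fin.last (k+1)) + r^2) := by
      rw [Fin.prod_univ_castSucc]
    have hsplit2 : (∏ i : Fin (k+2), (1 - 2*r*x i + r^2)) =
        (1 - 2*r*x 0 + r^2) * (∏ i : Fin (k+1), (1 - 2*r*x i.succ + r^2)) := by
      rw [Fin.prod_univ_succ]
    have hP : (∏ i : Fin (k+2), (1 - 2*r*x i + r^2)) ≠ 0 :=
      Finset.prod_ne_zero_iff.mpr fun i _ => hne _
    have hrel : (∏ i : Fin (k+1), (1 - 2*r*x i.castSucc + r^2)) *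
        (1 - 2*r*x (Fin.last (k+1)) + r^2) =
        (1 - 2*r*x 0 + r^2) * ∏ i : Fin (k+1), (1 - 2*r*x i.succ + r^2) :=
      hsplit1.symm.trans hsplit2
    rw [divDiff, h1, h2, div_eq_div_iff hxne hP, sub_mul, hsplit1]
    nth_rewrite 2 [hrel]
    field_simp
    ring

/-- `[cos θ₁, …, cos θ_d] P_r = (2r)^{d-1} / Π_i (1-2r cos θ_i + r²)`,
where `P_r(t) = 1/(1-2rt+r²)`. -/
theorem stmt6 (d : ℕ) (hd : 2 ≤ d) (r : ℝ) (hr0 : 0 ≤ r) (hr1 : r < 1)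
    (θ : Fin d → ℝ) (hθ : Function.Injective fun i => Real.cos (θ i)) :
    divDiff d (fun i => Real.cos (θ i)) (fun t => 1 / (1 - 2 * r * t + r ^ 2)) =
      (2 * r) ^ (d - 1) / ∏ i, (1 - 2 * r * Real.cos (θ i) + r ^ 2) := by
  obtain ⟨k, rfl⟩ : ∃ k, d = k + 1 := ⟨d - 1, by omega⟩
  have hne : ∀ i, 1 - 2 * r * Real.cos (θ i) + r ^ 2 ≠ 0 := fun i =>
    ne_of_gt (by nlinarith [Real.cos_le_one (θ i), sq_nonneg (1 - r)])
  simpa using aux6 r k (fun i => Real.cos (θ i)) hθ hne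
end
end
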